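/- arXiv:2310.06410 — 10 statements merged into one kernel-verified Lean document; each statement's English description precedes it below -/
import Mathlib

section
/- Let H ∈ ℝ^{n×n} be symmetric with smallest eigenvalue α₀ satisfying α₀ > ν²/4, where ν > 0. Then the block matrix P = [[2I, νI], [νI, 2H]] is symmetric positive definite, and moreover P ≥ ηI where η = 1 + α₀ - √((α₀+1)² - (4α₀ - ν²)) > 0. -/
/-!
The number `η = 1 + α₀ - √((α₀ - 1)² + ν²)` is the smaller root of `(2 - η)(2α₀ - η) = ν²`, and
`0 < η < 2`. Hence `P - ηI = [[(2 - η)I, νI], [νI, 2H - ηI]]` has a positive definite upper-left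
block, and its Schur complement `2H - ηI - ν²/(2 - η) I = 2(H - α₀I)` is positive semidefinite
because `α₀` bounds the spectrum of `H` from below. Positive definiteness of `P` then follows
from `P = (P - ηI) + ηI` with `η > 0`.
-/

open Matrix
open scoped ComplexOrder

namespace Matrix

theorem IsHermitian.posSemidef_sub_smul_one_iff {n 𝕜 : Type*} [Fintype n] [DecidableEq n]
    [RCLike 𝕜] {A : Matrix n n 𝕜} (hA : A.IsHermitian) (c : ℝ) :
    (A - c • 1).PosSemidef ↔ ∀ i, c ≤ hA.eigenvalues i := by
  rw [RCLike.real_smul_eq_coe_smul (K := 𝕜)]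
  conv_lhs => rw [hA.spectral_theorem,
    ← map_one (Unitary.conjStarAlgAut 𝕜 _ hA.eigenvectorUnitary), ← map_smul, ← map_sub]
  rw [Unitary.conjStarAlgAut_apply, Unitary.isUnit_coe.posSemidef_star_right_conjugate_iff,
    smul_one_eq_diagonal, diagonal_sub, posSemidef_diagonal_iff]
  simp [sub_nonneg]

theorem fromBlocks_sub_smul_one {m n R : Type*} [DecidableEq m] [DecidableEq n] [CommRing R]
    (A : Matrix m m R) (B : Matrix m n R) (C : Matrix n m R) (D : Matrix n n R) (c : R) :
    fromBlocks A B C D - c • 1 = fromBlocks (A - c • 1) B C (D - c • 1) := by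
  rw [← fromBlocks_one, fromBlocks_smul, sub_eq_add_neg, fromBlocks_neg, fromBlocks_add]
  simp [sub_eq_add_neg]

theorem posSemidef_fromBlocks_smul_one_iff {n : Type*} [Fintype n] [DecidableEq n] {c : ℝ}
    (hc : 0 < c) (b : ℝ) (D : Matrix n n ℝ) :
    (fromBlocks (c • 1 : Matrix n n ℝ) (b • 1) (b • 1) D).PosSemidef ↔
      (D - (b ^ 2 / c) • 1).PosSemidef := by
  have hinv : c⁻¹ • 1 * (c • 1 : Matrix n n ℝ) = 1 := by simp [hc.ne']
  let := invertibleOfLeftInverse _ _ hinv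
  have := PosDef.fromBlocks₁₁ (b • 1 : Matrix n n ℝ) D (PosDef.one.smul hc)
  rwa [inv_eq_left_inv hinv, conjTranspose_smul, conjTranspose_one, star_trivial,
    smul_mul_smul_comm, smul_mul_smul_comm, mul_one, mul_one, mul_right_comm, ← pow_two,
    ← div_eq_mul_inv] at this

end Matrix

theorem stmt2_general (n : ℕ) (H : Matrix (Fin n) (Fin n) ℝ) (hH : H.IsHermitian) (ν α₀ : ℝ)
    (hν : 0 < ν) (hlb : ∀ i, α₀ ≤ hH.eigenvalues i)
    (hα : ν ^ 2 / 4 < α₀) :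
    (Matrix.fromBlocks ((2 : ℝ) • (1 : Matrix (Fin n) (Fin n) ℝ)) (ν • 1) (ν • 1)
        ((2 : ℝ) • H)).PosDef ∧
    0 < 1 + α₀ - Real.sqrt ((α₀ + 1) ^ 2 - (4 * α₀ - ν ^ 2)) ∧
    (Matrix.fromBlocks ((2 : ℝ) • (1 : Matrix (Fin n) (Fin n) ℝ)) (ν • 1) (ν • 1)
        ((2 : ℝ) • H) -
      (1 + α₀ - Real.sqrt ((α₀ + 1) ^ 2 - (4 * α₀ - ν ^ 2))) • 1).PosSemidef := by
  obtain ⟨s, hs_nonneg, hs_sq, hs⟩ : ∃ s, 0 ≤ s ∧ s ^ 2 = (α₀ - 1) ^ 2 + ν ^ 2 ∧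
      Real.sqrt ((α₀ + 1) ^ 2 - (4 * α₀ - ν ^ 2)) = s :=
    ⟨_, Real.sqrt_nonneg _, by rw [Real.sq_sqrt (by nlinarith [sq_nonneg (α₀ - 1)])]; ring, rfl⟩
  rw [hs]
  set η := 1 + α₀ - s with hη_def
  have hη : 0 < η := by nlinarith
  have hc : 0 < 2 - η := by nlinarith
  have hschur : ν ^ 2 / (2 - η) = 2 * α₀ - η := by
    field_simp
    linear_combination -hs_sq
  have hPη : (fromBlocks ((2 : ℝ) • (1 : Matrix (Fin n) (Fin n) ℝ)) (ν • 1) (ν • 1)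
      ((2 : ℝ) • H) - η • 1).PosSemidef := by
    rw [fromBlocks_sub_smul_one, ← sub_smul, posSemidef_fromBlocks_smul_one_iff hc, hschur,
      show (2 : ℝ) • H - η • 1 - (2 * α₀ - η) • 1 = (2 : ℝ) • (H - α₀ • 1) by module]
    exact ((hH.posSemidef_sub_smul_one_iff α₀).2 hlb).smul zero_le_two
  exact ⟨by simpa using PosDef.posSemidef_add hPη (PosDef.one.smul hη), hη, hPη⟩

/-- If the smallest eigenvalue `α₀` of the real symmetric matrix `H` satisfies
`α₀ > ν²/4`, then `P = [[2I, νI], [νI, 2H]]` is symmetric positive definite and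
`P ≥ ηI` with `η = 1 + α₀ - √((α₀+1)² - (4α₀ - ν²)) > 0`. -/
theorem stmt2 (n : ℕ) (H : Matrix (Fin n) (Fin n) ℝ) (hH : H.IsHermitian) (ν α₀ : ℝ)
    (hν : 0 < ν) (hlb : ∀ i, α₀ ≤ hH.eigenvalues i) (hmin : ∃ i, hH.eigenvalues i = α₀)
    (hα : ν ^ 2 / 4 < α₀) :
    (Matrix.fromBlocks ((2 : ℝ) • (1 : Matrix (Fin n) (Fin n) ℝ)) (ν • 1) (ν • 1)
        ((2 : ℝ) • H)).PosDef ∧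
    0 < 1 + α₀ - Real.sqrt ((α₀ + 1) ^ 2 - (4 * α₀ - ν ^ 2)) ∧
    (Matrix.fromBlocks ((2 : ℝ) • (1 : Matrix (Fin n) (Fin n) ℝ)) (ν • 1) (ν • 1)
        ((2 : ℝ) • H) -
      (1 + α₀ - Real.sqrt ((α₀ + 1) ^ 2 - (4 * α₀ - ν ^ 2))) • 1).PosSemidef :=
  stmt2_general n H hH ν α₀ hν hlb hα
end

section
/- Let H ∈ ℝ^{n×n} be symmetric with smallest eigenvalue α₀ > ν²/4, ν > 0, Q = [[0, I], [-H, νI]], and P = [[2I, νI], [νI, 2H]]. Then QP + PQ^T = νP. -/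
open Matrix

/-- For `H` real symmetric with smallest eigenvalue `α₀ > ν²/4`, `ν > 0`,
`Q = [[0, I], [-H, νI]]` and `P = [[2I, νI], [νI, 2H]]` satisfy `QP + PQᵀ = νP`. -/
theorem stmt3 (n : ℕ) (H : Matrix (Fin n) (Fin n) ℝ) (hH : H.IsHermitian) (ν α₀ : ℝ)
    (hν : 0 < ν) (hlb : ∀ i, α₀ ≤ hH.eigenvalues i) (hmin : ∃ i, hH.eigenvalues i = α₀)
    (hα : ν ^ 2 / 4 < α₀) :
    (Matrix.fromBlocks (0 : Matrix (Fin n) (Fin n) ℝ) 1 (-H) (ν • 1)) *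
        (Matrix.fromBlocks ((2 : ℝ) • (1 : Matrix (Fin n) (Fin n) ℝ)) (ν • 1) (ν • 1)
          ((2 : ℝ) • H)) +
      (Matrix.fromBlocks ((2 : ℝ) • (1 : Matrix (Fin n) (Fin n) ℝ)) (ν • 1) (ν • 1)
          ((2 : ℝ) • H)) *
        (Matrix.fromBlocks (0 : Matrix (Fin n) (Fin n) ℝ) 1 (-H) (ν • 1))ᵀ =
      ν • (Matrix.fromBlocks ((2 : ℝ) • (1 : Matrix (Fin n) (Fin n) ℝ)) (ν • 1) (ν • 1)
          ((2 : ℝ) • H)) := by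
  have hsym : Hᵀ = H := hH.eq
  ext i j
  simp only [Matrix.fromBlocks_transpose, Matrix.transpose_zero, Matrix.transpose_one,
    Matrix.transpose_smul, Matrix.transpose_neg, hsym,
    Matrix.fromBlocks_multiply, Matrix.fromBlocks_add, Matrix.fromBlocks_smul]
  cases i <;> cases j <;>
    simp [Matrix.add_apply, Matrix.smul_apply, Matrix.mul_apply, Matrix.one_apply,
      mul_comm, mul_assoc, mul_left_comm] <;> (try split_ifs) <;> ring
end

section
/- Let H ∈ ℝ^{n×n} be symmetric with smallest eigenvalue α₀ satisfying 0 < α₀ ≤ ν²/4, ν > 0. With ω := α₀ if α₀ < ν²/4 (respectively ω := α₀ − ε²/4 with 0 < ε < ν if α₀ = ν²/4), the matrix P = [[2I, νI], [νI, 2H + (ν² − 4ω)I]] is symmetric positive definite and satisfies QP + PQ^T ≥ (ν − √(ν² − 4ω)) P, where Q = [[0, I], [-H, νI]]. -/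
/-!
Both claims are Schur-complement computations. With `s = √(ν² - 4ω)`, the blocks of `P` and of
`QP + PQᵀ - (ν - s)P` are polynomials in `H` whose upper-left blocks are `2I` and `2sI`; the
corresponding Schur complements are `2(H - ωI) + (ν²/2 - 2ω)I` and `2s(H - ωI)`, which are
positive definite resp. semidefinite because `H ≥ ωI` and `4ω < ν²`. The paper's `Q` and `P` are
`blockCompanion H ν` and `blockLyapunov H ν (ν² - 4ω)`.
-/

open Matrix
open scoped ComplexOrder

namespace Matrix

variable {m : Type*} [Fintype m] [DecidableEq m] {𝕜 : Type*} [RCLike 𝕜]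

open scoped MatrixOrder in
theorem IsHermitian.posSemidef_sub_smul_one {H : Matrix m m 𝕜} (hH : H.IsHermitian) {c : ℝ}
    (h : ∀ i, c ≤ hH.eigenvalues i) : (H - c • 1).PosSemidef := by
  rw [← le_iff, ← Algebra.algebraMap_eq_smul_one,
    algebraMap_le_iff_le_spectrum (p := IsSelfAdjoint) hH, hH.spectrum_real_eq_range_eigenvalues]
  rintro _ ⟨i, rfl⟩
  exact h i

theorem PosDef.fromBlocks₁₁_of_posDef {n : Type*} [Fintype n] [DecidableEq n] {A : Matrix m m 𝕜}
    (B : Matrix m n 𝕜) (D : Matrix n n 𝕜) (hA : A.PosDef) [Invertible A]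
    (hS : (D - Bᴴ * A⁻¹ * B).PosDef) : (fromBlocks A B Bᴴ D).PosDef := by
  have hP := (PosDef.fromBlocks₁₁ B D hA).2 hS.posSemidef
  rw [hP.posDef_iff_det_ne_zero, det_fromBlocks₁₁, invOf_eq_nonsing_inv]
  exact mul_ne_zero hA.det_pos.ne' hS.det_pos.ne'

theorem schur_complement_smul_one {a : ℝ} (ha : a ≠ 0) (b : ℝ) (D : Matrix m m 𝕜) :
    D - (b • (1 : Matrix m m 𝕜))ᴴ * (a • 1)⁻¹ * (b • 1) = D - (b ^ 2 / a) • 1 := by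
  rw [inv_eq_left_inv (B := a⁻¹ • 1) (by simp [smul_smul, ha])]
  simp only [conjTranspose_smul, conjTranspose_one, star_trivial, Matrix.smul_mul,
    Matrix.mul_smul, Matrix.one_mul, smul_smul]
  ring_nf

theorem posSemidef_fromBlocks_smul_one {a : ℝ} (ha : 0 < a) (b : ℝ) {D : Matrix m m 𝕜}
    (hD : (D - (b ^ 2 / a) • 1).PosSemidef) :
    (fromBlocks (a • (1 : Matrix m m 𝕜)) (b • 1) (b • 1) D).PosSemidef := by
  have hA : (a • (1 : Matrix m m 𝕜)).PosDef := PosDef.one.smul ha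
  let := hA.isUnit.invertible
  rw [← schur_complement_smul_one ha.ne'] at hD
  simpa using (hA.fromBlocks₁₁ (b • 1) D).2 hD

theorem posDef_fromBlocks_smul_one {a : ℝ} (ha : 0 < a) (b : ℝ) {D : Matrix m m 𝕜}
    (hD : (D - (b ^ 2 / a) • 1).PosDef) :
    (fromBlocks (a • (1 : Matrix m m 𝕜)) (b • 1) (b • 1) D).PosDef := by
  have hA : (a • (1 : Matrix m m 𝕜)).PosDef := PosDef.one.smul ha
  let := hA.isUnit.invertible
  rw [← schur_complement_smul_one ha.ne'] at hD
  simpa using hA.fromBlocks₁₁_of_posDef (b • 1) D hD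

def blockCompanion (H : Matrix m m ℝ) (ν : ℝ) : Matrix (m ⊕ m) (m ⊕ m) ℝ :=
  fromBlocks 0 1 (-H) (ν • 1)

def blockLyapunov (H : Matrix m m ℝ) (ν c : ℝ) : Matrix (m ⊕ m) (m ⊕ m) ℝ :=
  fromBlocks ((2 : ℝ) • 1) (ν • 1) (ν • 1) ((2 : ℝ) • H + c • 1)

theorem blockCompanion_mul_add_mul_transpose_sub_smul {H : Matrix m m ℝ} (hH : H.IsSymm)
    (ν c μ : ℝ) :
    blockCompanion H ν * blockLyapunov H ν c + blockLyapunov H ν c * (blockCompanion H ν)ᵀ -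
        μ • blockLyapunov H ν c =
      fromBlocks ((2 * (ν - μ)) • 1) ((ν ^ 2 + c - μ * ν) • 1) ((ν ^ 2 + c - μ * ν) • 1)
        ((2 * (ν - μ)) • H + ((2 * ν - μ) * c) • 1) := by
  rw [blockCompanion, blockLyapunov, fromBlocks_transpose, fromBlocks_multiply,
    fromBlocks_multiply, fromBlocks_smul, sub_eq_add_neg, fromBlocks_add, fromBlocks_neg,
    fromBlocks_add, fromBlocks_inj]
  refine ⟨?_, ?_, ?_, ?_⟩ <;>
    simp only [transpose_zero, transpose_one, transpose_smul, transpose_neg, hH.eq,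
      Matrix.smul_mul, Matrix.mul_smul, Matrix.one_mul, Matrix.mul_one, Matrix.mul_zero,
      Matrix.mul_neg, Matrix.mul_add, smul_smul, smul_add, smul_neg, sub_eq_add_neg] <;> module

theorem posDef_blockLyapunov {H : Matrix m m ℝ} {ν ω : ℝ} (hH : (H - ω • 1).PosSemidef)
    (hω : 4 * ω < ν ^ 2) : (blockLyapunov H ν (ν ^ 2 - 4 * ω)).PosDef := by
  refine posDef_fromBlocks_smul_one two_pos ν ?_
  have hschur : (2 : ℝ) • H + (ν ^ 2 - 4 * ω) • 1 - (ν ^ 2 / 2) • 1 =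
      (2 : ℝ) • (H - ω • 1) + (ν ^ 2 / 2 - 2 * ω) • (1 : Matrix m m ℝ) := by
    module
  rw [hschur]
  exact PosDef.posSemidef_add (hH.smul zero_le_two) (PosDef.one.smul (by linarith))

theorem posSemidef_blockCompanion_lyapunov_sub {H : Matrix m m ℝ} (hHs : H.IsSymm) {ν ω : ℝ}
    (hH : (H - ω • 1).PosSemidef) (hω : 4 * ω < ν ^ 2) :
    let P := blockLyapunov H ν (ν ^ 2 - 4 * ω)
    let Q := blockCompanion H ν
    (Q * P + P * Qᵀ - (ν - √(ν ^ 2 - 4 * ω)) • P).PosSemidef := by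
  intro P Q
  set s := √(ν ^ 2 - 4 * ω)
  have hs : 0 < s := Real.sqrt_pos.2 (by linarith)
  have hs2 : s ^ 2 = ν ^ 2 - 4 * ω := Real.sq_sqrt (by linarith)
  rw [blockCompanion_mul_add_mul_transpose_sub_smul hHs, sub_sub_cancel]
  refine posSemidef_fromBlocks_smul_one (by linarith) _ ?_
  have hcoef : (2 * ν - (ν - s)) * (ν ^ 2 - 4 * ω) -
      (ν ^ 2 + (ν ^ 2 - 4 * ω) - (ν - s) * ν) ^ 2 / (2 * s) = -(2 * s * ω) := by
    rw [← hs2]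
    field_simp
    linear_combination s ^ 2 * hs2
  have hschur : (2 * s) • H + ((2 * ν - (ν - s)) * (ν ^ 2 - 4 * ω)) • 1 -
      ((ν ^ 2 + (ν ^ 2 - 4 * ω) - (ν - s) * ν) ^ 2 / (2 * s)) • 1 =
      (2 * s) • (H - ω • (1 : Matrix m m ℝ)) := by
    rw [add_sub_assoc, ← sub_smul, hcoef]
    module
  rw [hschur]
  exact hH.smul (by linarith)

end Matrix

theorem stmt4_general (n : ℕ) (ν α₀ ω : ℝ)
    (H : Matrix (Fin n) (Fin n) ℝ) (hH : H.IsHermitian)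
    (hlb : ∀ i, α₀ ≤ hH.eigenvalues i)
    (hω : (α₀ < ν ^ 2 / 4 ∧ ω = α₀) ∨
      (α₀ = ν ^ 2 / 4 ∧ ∃ ε : ℝ, 0 < ε ∧ ε < ν ∧ ω = α₀ - ε ^ 2 / 4)) :
    let P := Matrix.fromBlocks ((2 : ℝ) • (1 : Matrix (Fin n) (Fin n) ℝ)) (ν • 1) (ν • 1)
      ((2 : ℝ) • H + (ν ^ 2 - 4 * ω) • 1)
    let Q := Matrix.fromBlocks (0 : Matrix (Fin n) (Fin n) ℝ) 1 (-H) (ν • 1)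
    P.PosDef ∧ (Q * P + P * Qᵀ - (ν - Real.sqrt (ν ^ 2 - 4 * ω)) • P).PosSemidef := by
  intro P Q
  obtain ⟨hωα, hων⟩ : ω ≤ α₀ ∧ 4 * ω < ν ^ 2 := by
    rcases hω with ⟨hα, rfl⟩ | ⟨hα, ε, hε, -, rfl⟩
    · exact ⟨le_rfl, by linarith⟩
    · constructor <;> nlinarith
  have hHω : (H - ω • 1).PosSemidef := hH.posSemidef_sub_smul_one fun i => hωα.trans (hlb i)
  exact ⟨posDef_blockLyapunov hHω hων,
    posSemidef_blockCompanion_lyapunov_sub (isHermitian_iff_isSymm.1 hH) hHω hων⟩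

/-- For `H` real symmetric with smallest eigenvalue `α₀`, `0 < α₀ ≤ ν²/4`, and `ω := α₀`
(if `α₀ < ν²/4`) resp. `ω := α₀ - ε²/4` with `0 < ε < ν` (if `α₀ = ν²/4`), the matrix
`P = [[2I, νI], [νI, 2H + (ν² - 4ω)I]]` is symmetric positive definite and satisfies
`QP + PQᵀ ≥ (ν - √(ν² - 4ω)) P` where `Q = [[0, I], [-H, νI]]`. -/
theorem stmt4 (n : ℕ) (ν α₀ ω : ℝ) (hν : 0 < ν)
    (H : Matrix (Fin n) (Fin n) ℝ) (hH : H.IsHermitian)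
    (hlb : ∀ i, α₀ ≤ hH.eigenvalues i) (hmin : ∃ i, hH.eigenvalues i = α₀)
    (h0 : 0 < α₀) (h1 : α₀ ≤ ν ^ 2 / 4)
    (hω : (α₀ < ν ^ 2 / 4 ∧ ω = α₀) ∨
      (α₀ = ν ^ 2 / 4 ∧ ∃ ε : ℝ, 0 < ε ∧ ε < ν ∧ ω = α₀ - ε ^ 2 / 4)) :
    let P := Matrix.fromBlocks ((2 : ℝ) • (1 : Matrix (Fin n) (Fin n) ℝ)) (ν • 1) (ν • 1)
      ((2 : ℝ) • H + (ν ^ 2 - 4 * ω) • 1)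
    let Q := Matrix.fromBlocks (0 : Matrix (Fin n) (Fin n) ℝ) 1 (-H) (ν • 1)
    P.PosDef ∧ (Q * P + P * Qᵀ - (ν - Real.sqrt (ν ^ 2 - 4 * ω)) • P).PosSemidef :=
  stmt4_general n ν α₀ ω H hH hlb hω
end

section
/- Let H ∈ ℝ^{n×n} be symmetric with smallest eigenvalue α₀ > −∞, ν > 0, σ > 0. Then there exist γ ≥ 0, δ ∈ [0, ν), and for each x the symmetric positive definite matrix P = [[2I, νI], [νI, 2H + 2aI]] (with a ≥ 0 such that a + α₀ > ν²/4) satisfying Q P + P Q^T + γD ≥ (ν − δ) P, where Q = [[0, I], [-H, νI]] and D = [[0,0],[0, σI]]. -/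
/-!
Both `P` and `QP + PQᵀ + γD - (ν - δ)P` are block matrices `[[p I, q I], [q I, s H + r I]]`.
Since `H ≥ α₀ I`, the Schur complement of the block `p I` is at least `(s α₀ + r - q²/p) I`,
so such a matrix is positive (semi)definite as soon as `q² < p (s α₀ + r)` (resp. `≤`).
For `P` this is exactly `ν²/4 < a + α₀`; for the Lyapunov matrix `γ` is a free term in `r`,
so it can be taken large enough.
-/

open Matrix
open scoped MatrixOrder

variable {m : Type*} [Fintype m] [DecidableEq m]

theorem posSemidef_sub_smul_one_of_le_eigenvalues {H : Matrix m m ℝ} (hH : H.IsHermitian)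
    {α₀ : ℝ} (hlb : ∀ i, α₀ ≤ hH.eigenvalues i) : (H - α₀ • 1).PosSemidef := by
  rw [← nonneg_iff_posSemidef, sub_nonneg, ← Algebra.algebraMap_eq_smul_one,
    algebraMap_le_iff_le_spectrum hH.isSelfAdjoint, hH.spectrum_real_eq_range_eigenvalues]
  rintro _ ⟨i, rfl⟩
  exact hlb i

section SmulOneBlocks

variable {H : Matrix m m ℝ} {α₀ p q s r : ℝ}

theorem schurComplement_fromBlocks_smul_one (α₀ : ℝ) (hp : p ≠ 0) :
    s • H + r • 1 - (q • 1 : Matrix m m ℝ)ᴴ * (p • 1)⁻¹ * (q • 1)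
      = (s * α₀ + r - q ^ 2 / p) • 1 + s • (H - α₀ • 1) := by
  rw [inv_eq_left_inv (B := p⁻¹ • 1) (by simp [smul_smul, hp])]
  simp only [conjTranspose_smul, conjTranspose_one, star_trivial, smul_mul_smul, mul_one]
  module

theorem posSemidef_fromBlocks_smul_one (hH : (H - α₀ • 1).PosSemidef) (hp : 0 < p) (hs : 0 ≤ s)
    (hq : q ^ 2 ≤ p * (s * α₀ + r)) :
    (fromBlocks (p • 1 : Matrix m m ℝ) (q • 1) (q • 1) (s • H + r • 1)).PosSemidef := by
  have hA : (p • 1 : Matrix m m ℝ).PosDef := PosDef.one.smul hp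
  have := hA.isUnit.invertible
  have hc : 0 ≤ s * α₀ + r - q ^ 2 / p := by
    rw [sub_nonneg, div_le_iff₀' hp]
    exact hq
  have h := (PosDef.fromBlocks₁₁ (q • 1 : Matrix m m ℝ) (s • H + r • 1) hA).2 <| by
    rw [schurComplement_fromBlocks_smul_one α₀ hp.ne']
    exact (PosSemidef.one.smul hc).add (hH.smul hs)
  simpa only [conjTranspose_smul, conjTranspose_one, star_trivial] using h

theorem posDef_fromBlocks_smul_one (hH : (H - α₀ • 1).PosSemidef) (hp : 0 < p) (hs : 0 ≤ s)
    (hq : q ^ 2 < p * (s * α₀ + r)) :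
    (fromBlocks (p • 1 : Matrix m m ℝ) (q • 1) (q • 1) (s • H + r • 1)).PosDef := by
  have hA : (p • 1 : Matrix m m ℝ).PosDef := PosDef.one.smul hp
  have := hA.isUnit.invertible
  have hc : 0 < s * α₀ + r - q ^ 2 / p := by
    rw [sub_pos, div_lt_iff₀' hp]
    exact hq
  have hS := (PosDef.one.smul hc).add_posSemidef (hH.smul hs)
  rw [← schurComplement_fromBlocks_smul_one α₀ hp.ne'] at hS
  simp only [conjTranspose_smul, conjTranspose_one, star_trivial] at hS
  rw [(posSemidef_fromBlocks_smul_one hH hp hs hq.le).posDef_iff_det_ne_zero, det_fromBlocks₁₁,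
    invOf_eq_nonsing_inv]
  exact mul_ne_zero hA.det_pos.ne' hS.det_pos.ne'

end SmulOneBlocks

theorem lyapunov_fromBlocks {H : Matrix m m ℝ} (hH : Hᵀ = H) (ν σ a γ δ : ℝ) :
    let P := fromBlocks ((2 : ℝ) • (1 : Matrix m m ℝ)) (ν • 1) (ν • 1) ((2 : ℝ) • H + (2 * a) • 1)
    let Q := fromBlocks (0 : Matrix m m ℝ) 1 (-H) (ν • 1)
    let D := fromBlocks (0 : Matrix m m ℝ) 0 0 (σ • 1)
    Q * P + P * Qᵀ + γ • D - (ν - δ) • P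
      = fromBlocks ((2 * δ) • 1) ((2 * a + ν * δ) • 1) ((2 * a + ν * δ) • 1)
          ((2 * δ) • H + (2 * a * ν + 2 * a * δ + γ * σ) • 1) := by
  intro P Q D
  simp only [P, Q, D, fromBlocks_transpose, fromBlocks_multiply, fromBlocks_smul, fromBlocks_add,
    sub_eq_add_neg, fromBlocks_neg, transpose_smul, transpose_one, transpose_neg, transpose_zero, hH]
  congr 1 <;>
    simp only [Matrix.mul_add, Matrix.mul_smul, Matrix.smul_mul, Matrix.mul_one, Matrix.one_mul,
      Matrix.mul_zero, Matrix.mul_neg, smul_zero, smul_add] <;>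
    module

/-- For `H` real symmetric with all eigenvalues `≥ α₀`, `ν, σ > 0`, there exist `γ ≥ 0`,
`δ ∈ [0, ν)` and `a ≥ 0` with `a + α₀ > ν²/4` such that
`P = [[2I, νI], [νI, 2H + 2aI]]` is positive definite and
`QP + PQᵀ + γD ≥ (ν - δ)P`, where `Q = [[0, I], [-H, νI]]` and `D = diag(0, σI)`. -/
theorem stmt6 (n : ℕ) (ν σ α₀ : ℝ) (hν : 0 < ν) (hσ : 0 < σ)
    (H : Matrix (Fin n) (Fin n) ℝ) (hH : H.IsHermitian)
    (hlb : ∀ i, α₀ ≤ hH.eigenvalues i) :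
    ∃ γ δ a : ℝ, 0 ≤ γ ∧ 0 ≤ δ ∧ δ < ν ∧ 0 ≤ a ∧ ν ^ 2 / 4 < a + α₀ ∧
      (let P := Matrix.fromBlocks ((2 : ℝ) • (1 : Matrix (Fin n) (Fin n) ℝ)) (ν • 1) (ν • 1)
          ((2 : ℝ) • H + (2 * a) • 1);
       let Q := Matrix.fromBlocks (0 : Matrix (Fin n) (Fin n) ℝ) 1 (-H) (ν • 1);
       let D := Matrix.fromBlocks (0 : Matrix (Fin n) (Fin n) ℝ) 0 0 (σ • 1);
       P.PosDef ∧ (Q * P + P * Qᵀ + γ • D - (ν - δ) • P).PosSemidef) := by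
  have hHα := posSemidef_sub_smul_one_of_le_eigenvalues hH hlb
  set a := |α₀| + ν ^ 2
  have haα : ν ^ 2 / 4 < a + α₀ := by
    have := neg_abs_le α₀
    nlinarith
  -- with `δ = ν / 2`, `γ σ` alone pays for the off-diagonal block: `q² = p γ σ`
  set γ := (2 * a + ν * (ν / 2)) ^ 2 / (ν * σ)
  refine ⟨γ, ν / 2, a, by positivity, by positivity, by linarith, by positivity, haα,
    posDef_fromBlocks_smul_one hHα two_pos two_pos.le (by linarith), ?_⟩
  rw [lyapunov_fromBlocks (by simpa using hH.eq)]
  refine posSemidef_fromBlocks_smul_one hHα (by linarith) (by linarith) ?_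
  have hγ : γ * σ * ν = (2 * a + ν * (ν / 2)) ^ 2 := by
    simp only [γ]
    field_simp
  nlinarith [abs_nonneg α₀, neg_abs_le α₀]
end

section
/- Let H ∈ ℝ^{n×n} be symmetric with smallest eigenvalue α₀, a ∈ ℝ with a + α₀ > ν²/4, ν > 0, and P = [[2I, νI], [νI, 2H + 2aI]]. Then c₁ P ≤ [[I, 0], [0, H + (1−α₀)I]] ≤ c₂ P with c₁ = 1/(a + α₀ + 1 + √((a+α₀−1)² + ν²)) and c₂ = (a + α₀ + 1 + √((a+α₀−1)² + ν²))/(4(a+α₀) − ν²). -/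
/-!
With `M = H - α₀ • 1 ⪰ 0` and `σ = a + α₀`, every combination `s • Dg + t • P` equals
`[[(s + 2t) I, tν I], [tν I, (s + 2tσ) I]] + diag(0, (s + 2t) M)`, so it is positive semidefinite
as soon as the 2×2 matrix `s I + t Q`, `Q = [[2, ν], [ν, 2σ]]`, is: the whole question reduces to
the bottom of the spectrum of `H`. The eigenvalues of `Q` are `σ + 1 ± √((σ - 1)² + ν²)`, with
product `det Q = 4σ - ν²`, and `c₁`, `c₂` are the reciprocals of the larger and the smaller one;
hence `I - c₁ Q` and `c₂ Q - I` are positive semidefinite (and singular).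
-/

open Matrix

variable {ι : Type*} [Fintype ι]

theorem Matrix.PosSemidef.fromBlocks_zero_zero_zero {R : Type*} [CommRing R] [PartialOrder R] [StarRing R]
    {M : Matrix ι ι R} (hM : M.PosSemidef) :
    (fromBlocks 0 0 0 M : Matrix (ι ⊕ ι) (ι ⊕ ι) R).PosSemidef := by
  rw [posSemidef_iff_dotProduct_mulVec] at hM ⊢
  refine ⟨isHermitian_fromBlocks_iff.mpr ⟨by simp, by simp, by simp, hM.1⟩, fun x => ?_⟩
  obtain ⟨u, v, rfl⟩ : ∃ u v, x = Sum.elim u v := ⟨_, _, (Sum.elim_comp_inl_inr x).symm⟩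
  simpa [Function.star_sumElim, fromBlocks_mulVec] using hM.2 v

variable [DecidableEq ι]

theorem Matrix.posSemidef_fromBlocks_smul_one_s9 {α β γ : ℝ} (hα : 0 ≤ α) (hγ : 0 ≤ γ)
    (hβ : β ^ 2 ≤ α * γ) :
    (fromBlocks (α • 1) (β • 1) (β • 1) (γ • 1) : Matrix (ι ⊕ ι) (ι ⊕ ι) ℝ).PosSemidef := by
  rw [posSemidef_iff_dotProduct_mulVec]
  refine ⟨isHermitian_fromBlocks_iff.mpr ⟨by simp, by simp, by simp, by simp⟩, fun x => ?_⟩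
  obtain ⟨u, v, rfl⟩ : ∃ u v, x = Sum.elim u v := ⟨_, _, (Sum.elim_comp_inl_inr x).symm⟩
  rw [star_trivial, fromBlocks_mulVec, sumElim_dotProduct_sumElim]
  simp only [Sum.elim_comp_inl, Sum.elim_comp_inr, smul_mulVec, one_mulVec, dotProduct,
    Pi.add_apply, Pi.smul_apply, smul_eq_mul, ← Finset.sum_add_distrib]
  refine Finset.sum_nonneg fun i _ => ?_
  rcases hα.eq_or_lt with rfl | hα
  · obtain rfl : β = 0 := by nlinarith
    nlinarith [mul_nonneg hγ (sq_nonneg (v i))]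
  · nlinarith [sq_nonneg (α * u i + β * v i), mul_nonneg (sub_nonneg.2 hβ) (sq_nonneg (v i))]

open scoped ComplexOrder in
theorem Matrix.IsHermitian.posSemidef_sub_smul_one_s9 {𝕜 : Type*} [RCLike 𝕜] {H : Matrix ι ι 𝕜}
    (hH : H.IsHermitian) {α : ℝ} (hα : ∀ i, α ≤ hH.eigenvalues i) :
    (H - α • (1 : Matrix ι ι 𝕜)).PosSemidef := by
  open MatrixOrder in
  rw [← Matrix.le_iff, ← Algebra.algebraMap_eq_smul_one,
    algebraMap_le_iff_le_spectrum hH.isSelfAdjoint, hH.spectrum_real_eq_range_eigenvalues]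
  rintro _ ⟨i, rfl⟩
  exact hα i

theorem Matrix.posSemidef_fromBlocks_smul_one_add {α β γ δ : ℝ} {M : Matrix ι ι ℝ}
    (hM : M.PosSemidef) (hα : 0 ≤ α) (hγ : 0 ≤ γ) (hδ : 0 ≤ δ) (hβ : β ^ 2 ≤ α * γ) :
    (fromBlocks (α • 1) (β • 1) (β • 1) (γ • 1 + δ • M) : Matrix (ι ⊕ ι) (ι ⊕ ι) ℝ).PosSemidef := by
  have hsplit : (fromBlocks (α • 1) (β • 1) (β • 1) (γ • 1 + δ • M) : Matrix (ι ⊕ ι) (ι ⊕ ι) ℝ) =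
      fromBlocks (α • 1) (β • 1) (β • 1) (γ • 1) + fromBlocks 0 0 0 (δ • M) := by
    simp only [fromBlocks_add, add_zero]
  rw [hsplit]
  exact (posSemidef_fromBlocks_smul_one_s9 hα hγ hβ).add (hM.smul hδ).fromBlocks_zero_zero_zero

-- `s • 1 + t • !![2, ν; ν, 2 * σ]` is positive semidefinite.
def BlockCoeffNonneg (σ ν s t : ℝ) : Prop :=
  0 ≤ s + 2 * t ∧ 0 ≤ s + 2 * t * σ ∧ (t * ν) ^ 2 ≤ (s + 2 * t) * (s + 2 * t * σ)

theorem posSemidef_smul_Dg_add_smul_P {H : Matrix ι ι ℝ} {ν a α₀ s t : ℝ}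
    (hH : (H - α₀ • 1).PosSemidef) (hst : BlockCoeffNonneg (a + α₀) ν s t) :
    (s • fromBlocks (1 : Matrix ι ι ℝ) 0 0 (H + (1 - α₀) • 1) +
      t • fromBlocks ((2 : ℝ) • 1) (ν • 1) (ν • 1) ((2 : ℝ) • H + (2 * a) • 1)).PosSemidef := by
  obtain ⟨h₁, h₂, h₃⟩ := hst
  convert posSemidef_fromBlocks_smul_one_add hH h₁ h₂ h₁ h₃ using 1
  simp only [fromBlocks_smul, fromBlocks_add]
  congr 1 <;> module

theorem blockCoeffNonneg_lower (σ ν : ℝ) :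
    BlockCoeffNonneg σ ν 1 (-(1 / (σ + 1 + √((σ - 1) ^ 2 + ν ^ 2)))) := by
  set r := √((σ - 1) ^ 2 + ν ^ 2)
  have hr : r ^ 2 = (σ - 1) ^ 2 + ν ^ 2 := Real.sq_sqrt (by positivity)
  have hr₁ : |σ - 1| ≤ r := Real.abs_le_sqrt (le_add_of_nonneg_right (sq_nonneg ν))
  have hx : 0 < σ + 1 + r := by linarith [neg_abs_le (σ - 1)]
  refine ⟨?_, ?_, le_of_eq ?_⟩
  · field_simp
    linarith [neg_abs_le (σ - 1)]
  · field_simp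
    linarith [le_abs_self (σ - 1)]
  · field_simp
    linear_combination -hr

theorem blockCoeffNonneg_upper {σ ν : ℝ} (h : ν ^ 2 / 4 < σ) :
    BlockCoeffNonneg σ ν (-1) ((σ + 1 + √((σ - 1) ^ 2 + ν ^ 2)) / (4 * σ - ν ^ 2)) := by
  set r := √((σ - 1) ^ 2 + ν ^ 2)
  have hr : r ^ 2 = (σ - 1) ^ 2 + ν ^ 2 := Real.sq_sqrt (by positivity)
  have hr₁ : |σ - 1| ≤ r := Real.abs_le_sqrt (le_add_of_nonneg_right (sq_nonneg ν))
  have hE : 0 < 4 * σ - ν ^ 2 := by linarith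
  have hσ : 0 < σ := by linarith [sq_nonneg ν]
  refine ⟨?_, ?_, le_of_eq ?_⟩
  · rw [le_neg_add_iff_add_le, add_zero, mul_div_assoc', le_div_iff₀ hE]
    nlinarith [le_abs_self (σ - 1)]
  · rw [le_neg_add_iff_add_le, add_zero, mul_div_assoc', div_mul_eq_mul_div, le_div_iff₀ hE]
    nlinarith [neg_abs_le (σ - 1)]
  · set c := (σ + 1 + r) / (4 * σ - ν ^ 2)
    have hc : c * (4 * σ - ν ^ 2) = σ + 1 + r := div_mul_cancel₀ _ hE.ne'
    refine mul_right_cancel₀ hE.ne' ?_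
    linear_combination (2 * (1 + σ) - c * (4 * σ - ν ^ 2) - (σ + 1 + r)) * hc - hr

theorem stmt9_general (n : ℕ) (ν α₀ a : ℝ)
    (H : Matrix (Fin n) (Fin n) ℝ) (hH : H.IsHermitian)
    (hlb : ∀ i, α₀ ≤ hH.eigenvalues i)
    (haα : ν ^ 2 / 4 < a + α₀) :
    let P := Matrix.fromBlocks ((2 : ℝ) • (1 : Matrix (Fin n) (Fin n) ℝ)) (ν • 1) (ν • 1)
      ((2 : ℝ) • H + (2 * a) • 1)
    let Dg := Matrix.fromBlocks (1 : Matrix (Fin n) (Fin n) ℝ) 0 0 (H + (1 - α₀) • 1)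
    let c₁ := 1 / (a + α₀ + 1 + Real.sqrt ((a + α₀ - 1) ^ 2 + ν ^ 2))
    let c₂ := (a + α₀ + 1 + Real.sqrt ((a + α₀ - 1) ^ 2 + ν ^ 2)) / (4 * (a + α₀) - ν ^ 2)
    (Dg - c₁ • P).PosSemidef ∧ (c₂ • P - Dg).PosSemidef := by
  intro P Dg c₁ c₂
  have hM : (H - α₀ • 1).PosSemidef := hH.posSemidef_sub_smul_one_s9 hlb
  constructor
  · convert posSemidef_smul_Dg_add_smul_P hM (blockCoeffNonneg_lower (a + α₀) ν) using 1
    module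
  · convert posSemidef_smul_Dg_add_smul_P hM (blockCoeffNonneg_upper haα) using 1
    module

/-- Two-sided matrix inequality between `diag(I, H + (1-α₀)I)` and
`P = [[2I, νI], [νI, 2H + 2aI]]` with explicit constants `c₁, c₂`. -/
theorem stmt9 (n : ℕ) (ν α₀ a : ℝ) (hν : 0 < ν)
    (H : Matrix (Fin n) (Fin n) ℝ) (hH : H.IsHermitian)
    (hlb : ∀ i, α₀ ≤ hH.eigenvalues i) (hmin : ∃ i, hH.eigenvalues i = α₀)
    (haα : ν ^ 2 / 4 < a + α₀) :
    let P := Matrix.fromBlocks ((2 : ℝ) • (1 : Matrix (Fin n) (Fin n) ℝ)) (ν • 1) (ν • 1)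
      ((2 : ℝ) • H + (2 * a) • 1)
    let Dg := Matrix.fromBlocks (1 : Matrix (Fin n) (Fin n) ℝ) 0 0 (H + (1 - α₀) • 1)
    let c₁ := 1 / (a + α₀ + 1 + Real.sqrt ((a + α₀ - 1) ^ 2 + ν ^ 2))
    let c₂ := (a + α₀ + 1 + Real.sqrt ((a + α₀ - 1) ^ 2 + ν ^ 2)) / (4 * (a + α₀) - ν ^ 2)
    (Dg - c₁ • P).PosSemidef ∧ (c₂ • P - Dg).PosSemidef :=
  stmt9_general n ν α₀ a H hH hlb haα
end

section
/- Let H ∈ ℝ^{n×n} be symmetric with eigenvalues α_i(x) ≥ α₀, where a + α₀ > ν²/4. The eigenvalues of P = [[2I, νI], [νI, 2H + 2aI]] are η_i^± = 1 + ζ_i ± √((ζ_i + 1)² − (4ζ_i − ν²)) where ζ_i = α_i + a; in particular all eigenvalues of P are at least η := (4(a+α₀−ν²/4)) / (1 + a + α₀ + √((a+α₀−1)² + ν²)) > 0. -/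
open Matrix

private def sumProdEquiv (n : ℕ) : (Fin n ⊕ Fin n) ≃ (Fin 2 × Fin n) where
  toFun := Sum.elim (fun i => (0, i)) (fun i => (1, i))
  invFun p := if p.1 = 0 then Sum.inl p.2 else Sum.inr p.2
  left_inv := by rintro (i | i) <;> simp
  right_inv := by rintro ⟨b, i⟩; fin_cases b <;> simp

private lemma det_block_diag {n : ℕ} (x y : ℝ) (d : Fin n → ℝ) :
    (fromBlocks (x • (1 : Matrix (Fin n) (Fin n) ℝ)) (y • (1 : Matrix (Fin n) (Fin n) ℝ))
      (y • (1 : Matrix (Fin n) (Fin n) ℝ)) (diagonal d)).det = ∏ i, (x * d i - y ^ 2) := by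
  have h : (fromBlocks (x • (1 : Matrix (Fin n) (Fin n) ℝ)) (y • (1 : Matrix (Fin n) (Fin n) ℝ))
      (y • (1 : Matrix (Fin n) (Fin n) ℝ)) (diagonal d)) =
      (blockDiagonal (fun i => !![x, y; y, d i])).submatrix (sumProdEquiv n) (sumProdEquiv n) := by
    ext p q
    rcases p with i | i <;> rcases q with j | j <;>
      simp [sumProdEquiv, blockDiagonal_apply, fromBlocks, one_apply, diagonal_apply,
        mul_ite, mul_one, mul_zero, eq_comm]
  rw [h, det_submatrix_equiv_self, det_blockDiagonal]
  refine Finset.prod_congr rfl fun i _ => ?_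
  rw [det_fin_two_of]; ring

private lemma fromBlocks_sub' {l m : Type*} (A A' : Matrix l l ℝ) (B B' : Matrix l m ℝ)
    (C C' : Matrix m l ℝ) (D D' : Matrix m m ℝ) :
    fromBlocks A B C D - fromBlocks A' B' C' D' =
      fromBlocks (A - A') (B - B') (C - C') (D - D') := by
  ext p q; rcases p with i | i <;> rcases q with j | j <;> simp [fromBlocks]

private lemma spec_det {n : ℕ} (ν a : ℝ) (H : Matrix (Fin n) (Fin n) ℝ) (hH : H.IsHermitian)
    (μ : ℝ) :
    (algebraMap ℝ (Matrix (Fin n ⊕ Fin n) (Fin n ⊕ Fin n) ℝ) μ -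
      Matrix.fromBlocks ((2 : ℝ) • (1 : Matrix (Fin n) (Fin n) ℝ)) (ν • 1) (ν • 1)
        ((2 : ℝ) • H + (2 * a) • 1)).det =
    ∏ i, ((μ - 2) * (μ - 2 * hH.eigenvalues i - 2 * a) - ν ^ 2) := by
  set U : Matrix (Fin n) (Fin n) ℝ := (hH.eigenvectorUnitary : Matrix (Fin n) (Fin n) ℝ) with hU
  have hU1 : U * star U = 1 := (Matrix.mem_unitaryGroup_iff).mp hH.eigenvectorUnitary.2
  have hspec : H = U * diagonal hH.eigenvalues * star U := by
    simpa [RCLike.ofReal_real_eq_id] using hH.spectral_theorem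
  set D : Matrix (Fin n) (Fin n) ℝ := diagonal (fun i => μ - 2 * hH.eigenvalues i - 2 * a) with hD
  set M : Matrix (Fin n ⊕ Fin n) (Fin n ⊕ Fin n) ℝ :=
    fromBlocks ((μ - 2) • 1) ((-ν) • 1) ((-ν) • 1) D with hM
  set Q : Matrix (Fin n ⊕ Fin n) (Fin n ⊕ Fin n) ℝ := fromBlocks U 0 0 U with hQ
  set Qs : Matrix (Fin n ⊕ Fin n) (Fin n ⊕ Fin n) ℝ := fromBlocks (star U) 0 0 (star U) with hQs
  have hQQs : Q * Qs = 1 := by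
    rw [hQ, hQs, fromBlocks_multiply]
    simp [hU1, fromBlocks_one]
  have hDconj : U * D * star U = μ • (1 : Matrix (Fin n) (Fin n) ℝ) -
      ((2 : ℝ) • H + (2 * a) • 1) := by
    have hD' : D = μ • (1 : Matrix (Fin n) (Fin n) ℝ)
        - (2 : ℝ) • diagonal hH.eigenvalues - (2 * a) • 1 := by
      ext i j
      by_cases h : i = j <;>
        simp [hD, Matrix.one_apply, h, diagonal_apply] <;> ring
    rw [hD']
    simp only [Matrix.sub_mul, Matrix.mul_sub, Matrix.smul_mul, Matrix.mul_smul,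
      Matrix.mul_one, Matrix.one_mul]
    rw [hU1, ← hspec]
    module
  have hR : Q * M * Qs = fromBlocks ((μ - 2) • 1) ((-ν) • 1) ((-ν) • 1) (U * D * star U) := by
    rw [hQ, hM, hQs, fromBlocks_multiply, fromBlocks_multiply]
    congr 1 <;>
      simp [Matrix.mul_smul, Matrix.smul_mul, Matrix.mul_one, hU1, Matrix.mul_assoc]
  have hL : algebraMap ℝ (Matrix (Fin n ⊕ Fin n) (Fin n ⊕ Fin n) ℝ) μ -
      Matrix.fromBlocks ((2 : ℝ) • (1 : Matrix (Fin n) (Fin n) ℝ)) (ν • 1) (ν • 1)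
        ((2 : ℝ) • H + (2 * a) • 1) =
      fromBlocks ((μ - 2) • 1) ((-ν) • 1) ((-ν) • 1)
        (μ • (1 : Matrix (Fin n) (Fin n) ℝ) - ((2 : ℝ) • H + (2 * a) • 1)) := by
    rw [Algebra.algebraMap_eq_smul_one, ← fromBlocks_one, fromBlocks_smul, fromBlocks_sub']
    congr 1 <;> simp [sub_smul]
  rw [hL, ← hDconj, ← hR, Matrix.det_mul, Matrix.det_mul, mul_comm, ← mul_assoc,
    mul_comm Qs.det, ← Matrix.det_mul, hQQs, Matrix.det_one, one_mul, hM, hD,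
    det_block_diag]
  refine Finset.prod_congr rfl fun i _ => by ring

/-- The spectrum of `P = [[2I, νI], [νI, 2H + 2aI]]` consists of the values
`1 + ζᵢ ± √((ζᵢ+1)² - (4ζᵢ - ν²))` with `ζᵢ = αᵢ + a`; in particular all eigenvalues
of `P` are at least `η = 4(a + α₀ - ν²/4)/(1 + a + α₀ + √((a+α₀-1)² + ν²)) > 0`. -/
theorem stmt10 (n : ℕ) (ν α₀ a : ℝ) (hν : 0 < ν) (ha : 0 ≤ a)
    (H : Matrix (Fin n) (Fin n) ℝ) (hH : H.IsHermitian)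
    (hlb : ∀ i, α₀ ≤ hH.eigenvalues i) (haα : ν ^ 2 / 4 < a + α₀) :
    let P := Matrix.fromBlocks ((2 : ℝ) • (1 : Matrix (Fin n) (Fin n) ℝ)) (ν • 1) (ν • 1)
      ((2 : ℝ) • H + (2 * a) • 1)
    let η := 4 * (a + α₀ - ν ^ 2 / 4) /
      (1 + a + α₀ + Real.sqrt ((a + α₀ - 1) ^ 2 + ν ^ 2))
    spectrum ℝ P = {μ : ℝ | ∃ i : Fin n,
        μ = 1 + (hH.eigenvalues i + a) +
            Real.sqrt ((hH.eigenvalues i + a + 1) ^ 2 - (4 * (hH.eigenvalues i + a) - ν ^ 2)) ∨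
        μ = 1 + (hH.eigenvalues i + a) -
            Real.sqrt ((hH.eigenvalues i + a + 1) ^ 2 - (4 * (hH.eigenvalues i + a) - ν ^ 2))} ∧
    0 < η ∧ ∀ μ ∈ spectrum ℝ P, η ≤ μ := by
  intro P η
  have hP : P = Matrix.fromBlocks ((2 : ℝ) • (1 : Matrix (Fin n) (Fin n) ℝ)) (ν • 1) (ν • 1)
      ((2 : ℝ) • H + (2 * a) • 1) := rfl
  have hη : η = 4 * (a + α₀ - ν ^ 2 / 4) /
      (1 + a + α₀ + Real.sqrt ((a + α₀ - 1) ^ 2 + ν ^ 2)) := rfl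
  have hfac : ∀ (μ : ℝ) (i : Fin n),
      ((μ - 2) * (μ - 2 * hH.eigenvalues i - 2 * a) - ν ^ 2 = 0 ↔
        (μ = 1 + (hH.eigenvalues i + a) + Real.sqrt ((hH.eigenvalues i + a + 1) ^ 2 -
            (4 * (hH.eigenvalues i + a) - ν ^ 2)) ∨
         μ = 1 + (hH.eigenvalues i + a) - Real.sqrt ((hH.eigenvalues i + a + 1) ^ 2 -
            (4 * (hH.eigenvalues i + a) - ν ^ 2)))) := by
    intro μ i
    set ζ := hH.eigenvalues i + a with hζ
    set s := Real.sqrt ((ζ + 1) ^ 2 - (4 * ζ - ν ^ 2)) with hs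
    have harg : (ζ + 1) ^ 2 - (4 * ζ - ν ^ 2) = (ζ - 1) ^ 2 + ν ^ 2 := by ring
    have hs2 : s ^ 2 = (ζ - 1) ^ 2 + ν ^ 2 := by
      rw [hs, harg]; exact Real.sq_sqrt (by positivity)
    have hfactor : (μ - 2) * (μ - 2 * hH.eigenvalues i - 2 * a) - ν ^ 2 =
        (μ - (1 + ζ + s)) * (μ - (1 + ζ - s)) := by
      linear_combination hs2
    rw [hfactor, mul_eq_zero, sub_eq_zero, sub_eq_zero]
  have hdetchar : ∀ μ : ℝ, μ ∈ spectrum ℝ P ↔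
      (algebraMap ℝ (Matrix (Fin n ⊕ Fin n) (Fin n ⊕ Fin n) ℝ) μ - P).det = 0 := by
    intro μ
    rw [spectrum.mem_iff, Matrix.isUnit_iff_isUnit_det, isUnit_iff_ne_zero, not_ne_iff]
  have hspec_eq : spectrum ℝ P = {μ : ℝ | ∃ i : Fin n,
      μ = 1 + (hH.eigenvalues i + a) +
          Real.sqrt ((hH.eigenvalues i + a + 1) ^ 2 - (4 * (hH.eigenvalues i + a) - ν ^ 2)) ∨
      μ = 1 + (hH.eigenvalues i + a) -
          Real.sqrt ((hH.eigenvalues i + a + 1) ^ 2 - (4 * (hH.eigenvalues i + a) - ν ^ 2))} := by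
    ext μ
    rw [Set.mem_setOf_eq, hdetchar μ, hP, spec_det ν a H hH μ, Finset.prod_eq_zero_iff]
    simp only [Finset.mem_univ, true_and]
    exact exists_congr fun i => hfac μ i
  have hs0sq : Real.sqrt ((a + α₀ - 1) ^ 2 + ν ^ 2) ^ 2 = (a + α₀ - 1) ^ 2 + ν ^ 2 :=
    Real.sq_sqrt (by positivity)
  have hs0nn : 0 ≤ Real.sqrt ((a + α₀ - 1) ^ 2 + ν ^ 2) := Real.sqrt_nonneg _
  have hz0pos : 0 < a + α₀ := lt_of_le_of_lt (by positivity) haα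
  have hden : 0 < 1 + a + α₀ + Real.sqrt ((a + α₀ - 1) ^ 2 + ν ^ 2) := by linarith
  have hηpos : 0 < η := by
    rw [hη]
    exact div_pos (by nlinarith) hden
  have hηeq : η = 1 + (a + α₀) - Real.sqrt ((a + α₀ - 1) ^ 2 + ν ^ 2) := by
    rw [hη, div_eq_iff hden.ne']
    linear_combination hs0sq
  have hs0ge : a + α₀ - 1 ≤ Real.sqrt ((a + α₀ - 1) ^ 2 + ν ^ 2) := by
    nlinarith [hs0sq, hs0nn]
  have hlow : ∀ i : Fin n, η ≤ 1 + (hH.eigenvalues i + a) -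
      Real.sqrt ((hH.eigenvalues i + a + 1) ^ 2 - (4 * (hH.eigenvalues i + a) - ν ^ 2)) := by
    intro i
    have hζ : a + α₀ ≤ hH.eigenvalues i + a := by have := hlb i; linarith
    have hkey : Real.sqrt ((hH.eigenvalues i + a + 1) ^ 2 -
        (4 * (hH.eigenvalues i + a) - ν ^ 2)) ≤
        (hH.eigenvalues i + a - (a + α₀)) + Real.sqrt ((a + α₀ - 1) ^ 2 + ν ^ 2) := by
      rw [Real.sqrt_le_iff]
      constructor
      · linarith
      · nlinarith [hs0sq, hs0ge, hζ, hs0nn]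
    rw [hηeq]
    linarith
  refine ⟨hspec_eq, hηpos, ?_⟩
  intro μ hμ
  rw [hspec_eq] at hμ
  obtain ⟨i, h | h⟩ := hμ
  · have hsnn : 0 ≤ Real.sqrt ((hH.eigenvalues i + a + 1) ^ 2 -
        (4 * (hH.eigenvalues i + a) - ν ^ 2)) := Real.sqrt_nonneg _
    rw [h]
    linarith [hlow i]
  · rw [h]
    exact hlow i
end

section
/- Suppose c ∈ ℝ, τ ∈ [0, ν), ν, σ > 0, and for each i ∈ {1,...,n} let T_i := ∂²(∂_{x_i}V)/∂x² and S := ∂²V/∂x² + cI (symmetric matrices). If S is positive semidefinite with smallest eigenvalue bounded below by α(x)+c, and −√(2τν²/(nσ))(α(x)+c)I ≤ T_i ≤ √(2τν²/(nσ))(α(x)+c)I for each i, then the n(n+1)×n(n+1) block matrix with diagonal blocks ν S (n times) and (τν/(2σ)) S, and with off-diagonal blocks −(1/2)T_i in the last block row/column, is positive semidefinite. -/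
open Matrix

private lemma cross_bound {n : ℕ} (γ : ℝ) (T : Matrix (Fin n) (Fin n) ℝ) (hT : Tᵀ = T)
    (h1 : (γ • (1 : Matrix (Fin n) (Fin n) ℝ) - T).PosSemidef)
    (h2 : (T + γ • (1 : Matrix (Fin n) (Fin n) ℝ)).PosSemidef)
    (u v : Fin n → ℝ) :
    u ⬝ᵥ T *ᵥ v ≤ γ / 2 * (u ⬝ᵥ u + v ⬝ᵥ v) := by
  have hsym : ∀ a b : Fin n → ℝ, a ⬝ᵥ T *ᵥ b = b ⬝ᵥ T *ᵥ a := fun a b => by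
    rw [dotProduct_mulVec, ← mulVec_transpose, hT, dotProduct_comm]
  have p := h1.dotProduct_mulVec_nonneg (u + v)
  have q := h2.dotProduct_mulVec_nonneg (u - v)
  simp only [star_trivial, sub_mulVec, add_mulVec, smul_mulVec, one_mulVec,
    dotProduct_sub, dotProduct_add, dotProduct_smul, smul_eq_mul, add_dotProduct,
    sub_dotProduct, mulVec_add, mulVec_sub] at p q
  rw [hsym v u] at p q
  rw [dotProduct_comm v u] at p q
  linarith

private lemma blockdiag_quad {n : ℕ} (N : Matrix (Fin n) (Fin n) ℝ) (X : Fin n × Fin n → ℝ) :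
    X ⬝ᵥ (blockDiagonal (fun _ : Fin n => N)) *ᵥ X
      = ∑ k : Fin n, (fun i => X (i,k)) ⬝ᵥ N *ᵥ (fun i => X (i,k)) := by
  simp only [mulVec, dotProduct, blockDiagonal_apply, Fintype.sum_prod_type]
  rw [Finset.sum_comm]
  congr 1; ext k
  congr 1; ext i
  simp [Finset.mul_sum, mul_ite]

/-- Assumption 2.2' implies Assumption 2.2: if `S ≥ (α+c)I ≥ 0` and each symmetric `Tᵢ`
satisfies `-√(2τν²/(nσ))(α+c)I ≤ Tᵢ ≤ √(2τν²/(nσ))(α+c)I`, then the `n(n+1) × n(n+1)`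
block matrix with diagonal blocks `νS` (n times) and `(τν/(2σ))S`, and blocks
`-(1/2)Tᵢ` in the last block row/column, is positive semidefinite. -/
theorem stmt11 (n : ℕ) (hn : 0 < n) (ν σ τ ac : ℝ) (hν : 0 < ν) (hσ : 0 < σ)
    (hτ0 : 0 ≤ τ) (hτν : τ < ν)
    (S : Matrix (Fin n) (Fin n) ℝ) (hS : S.IsSymm)
    (T : Fin n → Matrix (Fin n) (Fin n) ℝ) (hT : ∀ i, (T i).IsSymm)
    (hac : 0 ≤ ac)
    (hSlb : (S - ac • 1).PosSemidef)
    (hTub : ∀ i, ((Real.sqrt (2 * τ * ν ^ 2 / (n * σ)) * ac) • (1 : Matrix (Fin n) (Fin n) ℝ)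
      - T i).PosSemidef)
    (hTlb : ∀ i, (T i + (Real.sqrt (2 * τ * ν ^ 2 / (n * σ)) * ac) •
      (1 : Matrix (Fin n) (Fin n) ℝ)).PosSemidef) :
    (Matrix.fromBlocks
      (Matrix.blockDiagonal (fun _ : Fin n => ν • S))
      (Matrix.of fun p : Fin n × Fin n => fun l : Fin n => -(1 / 2) * T p.2 p.1 l)
      (Matrix.of fun p : Fin n × Fin n => fun l : Fin n => -(1 / 2) * T p.2 p.1 l)ᵀ
      ((τ * ν / (2 * σ)) • S)).PosSemidef := by
  have hn' : (0:ℝ) < n := by exact_mod_cast hn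
  set β := Real.sqrt (2 * τ * ν ^ 2 / (n * σ)) with hβdef
  set b2 : ℝ := τ * ν / (2 * σ * n) with hb2def
  have hb2nn : 0 ≤ b2 := by positivity
  set a := Real.sqrt ν with hadef
  set b := Real.sqrt b2 with hbdef
  have ha2 : a ^ 2 = ν := Real.sq_sqrt hν.le
  have hb2' : b ^ 2 = b2 := Real.sq_sqrt hb2nn
  have hanneg : 0 ≤ a := Real.sqrt_nonneg _
  have hbnneg : 0 ≤ b := Real.sqrt_nonneg _
  have hβ : β = 2 * a * b := by
    have h4 : 2 * τ * ν ^ 2 / (n * σ) = (2 * a * b) ^ 2 := by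
      have : (2 * a * b) ^ 2 = 4 * a ^ 2 * b ^ 2 := by ring
      rw [this, ha2, hb2', hb2def]
      field_simp
      ring
    rw [hβdef, h4, Real.sqrt_sq (by positivity)]
  have hdotnn : ∀ w : Fin n → ℝ, 0 ≤ w ⬝ᵥ w := fun w =>
    Finset.sum_nonneg fun i _ => mul_self_nonneg _
  have hSq : ∀ w : Fin n → ℝ, ac * (w ⬝ᵥ w) ≤ w ⬝ᵥ S *ᵥ w := fun w => by
    have h := hSlb.dotProduct_mulVec_nonneg w
    simp only [star_trivial, sub_mulVec, smul_mulVec, one_mulVec, dotProduct_sub,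
      dotProduct_smul, smul_eq_mul] at h
    linarith
  -- key scalar inequality
  have key : ∀ (k : Fin n) (x y : Fin n → ℝ),
      x ⬝ᵥ (T k) *ᵥ y ≤ ac * (ν * (x ⬝ᵥ x) + b2 * (y ⬝ᵥ y)) := by
    intro k x y
    rcases eq_or_lt_of_le hτ0 with h0 | hpos
    · have hb20 : b2 = 0 := by rw [hb2def, ← h0]; ring
      have hβ0 : β * ac = 0 := by
        rw [hβ, hbdef, hb20, Real.sqrt_zero]; ring
      have hc := cross_bound (β * ac) (T k) (hT k) (hTub k) (hTlb k) x y
      rw [hβ0] at hc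
      have h1 : x ⬝ᵥ T k *ᵥ y ≤ 0 := by simpa using hc
      have : 0 ≤ ac * (ν * (x ⬝ᵥ x) + b2 * (y ⬝ᵥ y)) := by
        have := hdotnn x; have := hdotnn y; positivity
      linarith
    · have hb2pos : 0 < b2 := by rw [hb2def]; positivity
      have hapos : 0 < a := Real.sqrt_pos.mpr hν
      have hbpos : 0 < b := Real.sqrt_pos.mpr hb2pos
      have hc := cross_bound (β * ac) (T k) (hT k) (hTub k) (hTlb k) (a • x) (b • y)
      simp only [smul_dotProduct, dotProduct_smul, mulVec_smul, smul_eq_mul] at hc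
      rw [hβ] at hc
      have hab : 0 < a * b := mul_pos hapos hbpos
      rw [← mul_le_mul_iff_right₀ hab]
      calc a * b * (x ⬝ᵥ T k *ᵥ y) = b * (a * (x ⬝ᵥ T k *ᵥ y)) := by ring
        _ ≤ 2 * a * b * ac / 2 * (a * (a * (x ⬝ᵥ x)) + b * (b * (y ⬝ᵥ y))) := hc
        _ = a * b * (ac * (a ^ 2 * (x ⬝ᵥ x) + b ^ 2 * (y ⬝ᵥ y))) := by ring
        _ = a * b * (ac * (ν * (x ⬝ᵥ x) + b2 * (y ⬝ᵥ y))) := by rw [ha2, hb2']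
  refine Matrix.PosSemidef.of_dotProduct_mulVec_nonneg ?_ ?_
  · rw [isHermitian_fromBlocks_iff]
    refine ⟨?_, ?_, ?_, ?_⟩
    · ext ⟨i, k⟩ ⟨j, m⟩
      simp only [conjTranspose_apply, blockDiagonal_apply, star_trivial, Matrix.smul_apply,
        smul_eq_mul]
      by_cases h : k = m
      · subst h; simp [hS.apply i j]
      · rw [if_neg h, if_neg (Ne.symm h)]
    · ext l p
      simp [conjTranspose_apply]
    · ext p l
      simp [conjTranspose_apply]
    · ext l l'
      simp only [conjTranspose_apply, star_trivial, Matrix.smul_apply, smul_eq_mul]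
      rw [hS.apply l l']
  · intro z
    set X : Fin n × Fin n → ℝ := fun p => z (Sum.inl p) with hX
    set Y : Fin n → ℝ := fun l => z (Sum.inr l) with hY
    have hz : z = Sum.elim X Y := by funext w; cases w <;> rfl
    set B : Matrix (Fin n × Fin n) (Fin n) ℝ :=
      Matrix.of fun p : Fin n × Fin n => fun l : Fin n => -(1 / 2) * T p.2 p.1 l with hB
    rw [hz]
    rw [fromBlocks_mulVec]
    rw [star_trivial, sumElim_dotProduct_sumElim, dotProduct_add, dotProduct_add]
    simp only [Sum.elim_comp_inl, Sum.elim_comp_inr]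
    have h1 : X ⬝ᵥ (blockDiagonal fun _ : Fin n => ν • S) *ᵥ X
        = ∑ k : Fin n, ν * ((fun i => X (i,k)) ⬝ᵥ S *ᵥ (fun i => X (i,k))) := by
      rw [blockdiag_quad]
      congr 1; ext k
      rw [smul_mulVec, dotProduct_smul, smul_eq_mul]
    have h2 : X ⬝ᵥ B *ᵥ Y
        = ∑ k : Fin n, -(1/2) * ((fun i => X (i,k)) ⬝ᵥ (T k) *ᵥ Y) := by
      simp only [mulVec, dotProduct, hB, of_apply, Fintype.sum_prod_type, Finset.mul_sum]
      rw [Finset.sum_comm]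
      refine Finset.sum_congr rfl fun k _ => ?_
      refine Finset.sum_congr rfl fun i _ => ?_
      refine Finset.sum_congr rfl fun l _ => ?_
      ring
    have h3 : Y ⬝ᵥ Bᵀ *ᵥ X = X ⬝ᵥ B *ᵥ Y := by
      rw [mulVec_transpose, dotProduct_comm, ← dotProduct_mulVec]
    have h4 : Y ⬝ᵥ ((τ * ν / (2 * σ)) • S) *ᵥ Y
        = ∑ _k : Fin n, b2 * (Y ⬝ᵥ S *ᵥ Y) := by
      rw [smul_mulVec, dotProduct_smul, smul_eq_mul, Finset.sum_const,
        Finset.card_univ, Fintype.card_fin, nsmul_eq_mul]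
      rw [hb2def]
      field_simp
    rw [h1, h2, h3, h2, h4, ← Finset.sum_add_distrib, ← Finset.sum_add_distrib,
      ← Finset.sum_add_distrib]
    apply Finset.sum_nonneg
    intro k _
    set x : Fin n → ℝ := fun i => X (i, k)
    have hkey := key k x Y
    have hx := hSq x
    have hy := hSq Y
    have hxx := hdotnn x
    have hyy := hdotnn Y
    have hax : ν * (ac * (x ⬝ᵥ x)) ≤ ν * (x ⬝ᵥ S *ᵥ x) :=
      mul_le_mul_of_nonneg_left hx hν.le
    have hay : b2 * (ac * (Y ⬝ᵥ Y)) ≤ b2 * (Y ⬝ᵥ S *ᵥ Y) :=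
      mul_le_mul_of_nonneg_left hy hb2nn
    nlinarith [hkey, hax, hay]
end

section
/- Let A, B be real symmetric n×n matrices with A positive semidefinite and suppose that for some constants ν > 0, τ ≥ 0, σ > 0 the 2n×2n block matrix [[νA, −(1/2)B], [−(1/2)B, (τν/(2σ))A]] is positive semidefinite. Then for every δ > 0, ((2σν + δ²τν)/(2σδ)) Tr(A²) ≥ Tr(A B); in particular, taking δ = √(2σ/τ) (for τ > 0), √(2τν²/σ) Tr(A²) ≥ Tr(A B). -/
/-!
Both `Y` and `X_δ = [[1, δ], [δ, δ²]] ⊗ A` are positive semidefinite, so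
`0 ≤ Tr(X_δ Y) = (ν + δ² τν/(2σ)) Tr(A²) - δ Tr(AB)`. Dividing by `δ` gives the bound for every
`δ > 0`, and `δ = √(2σ/τ)` is the choice that minimises its coefficient.
-/

open Matrix
open scoped ComplexOrder

namespace Matrix

variable {m : Type*} [Fintype m]

theorem PosSemidef.trace_mul_nonneg {𝕜 : Type*} [RCLike 𝕜] {X Y : Matrix m m 𝕜}
    (hX : X.PosSemidef) (hY : Y.PosSemidef) : 0 ≤ (X * Y).trace := by
  classical
  obtain ⟨C, rfl⟩ : ∃ C, Y = star C * C := by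
    open scoped MatrixOrder in exact CStarAlgebra.nonneg_iff_eq_star_mul_self.mp hY.nonneg
  rw [← Matrix.mul_assoc, trace_mul_cycle, star_eq_conjTranspose]
  exact (hX.mul_mul_conjTranspose_same C).trace_nonneg

theorem trace_fromBlocks {R n : Type*} [AddCommMonoid R] [Fintype n]
    (A : Matrix m m R) (B : Matrix m n R) (C : Matrix n m R) (D : Matrix n n R) :
    (fromBlocks A B C D).trace = A.trace + D.trace := by
  simp [trace, Fintype.sum_sum_type]

-- `[[A, δA], [δA, δ²A]] = Mᴴ A M` with `M = [1, δ • 1]`.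
theorem PosSemidef.fromBlocks_smul {A : Matrix m m ℝ} (hA : A.PosSemidef) (δ : ℝ) :
    (fromBlocks A (δ • A) (δ • A) (δ ^ 2 • A)).PosSemidef := by
  classical
  have h := hA.conjTranspose_mul_mul_same (fromCols (1 : Matrix m m ℝ) (δ • (1 : Matrix m m ℝ)))
  rw [conjTranspose_fromCols_eq_fromRows_conjTranspose, fromRows_mul, fromRows_mul_fromCols] at h
  simpa [sq, smul_smul] using h

theorem PosSemidef.trace_quadratic_nonneg_of_fromBlocks_smul {A B : Matrix m m ℝ}
    (hA : A.PosSemidef) {a b c : ℝ}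
    (hY : (fromBlocks (a • A) (b • B) (b • B) (c • A)).PosSemidef) (δ : ℝ) :
    0 ≤ (a + δ ^ 2 * c) * (A * A).trace + 2 * δ * b * (A * B).trace := by
  have h := (hA.fromBlocks_smul δ).trace_mul_nonneg hY
  simp only [fromBlocks_multiply, trace_fromBlocks, trace_add, smul_mul, Matrix.mul_smul,
    trace_smul, smul_eq_mul] at h
  linarith

end Matrix

theorem stmt12_general (n : ℕ) (ν σ τ : ℝ) (hν : 0 < ν) (hσ : 0 < σ) (hτ : 0 < τ)
    (A B : Matrix (Fin n) (Fin n) ℝ) (hApsd : A.PosSemidef)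
    (hY : (Matrix.fromBlocks (ν • A) ((-(1 : ℝ) / 2) • B) ((-(1 : ℝ) / 2) • B)
      ((τ * ν / (2 * σ)) • A)).PosSemidef) :
    (∀ δ : ℝ, 0 < δ →
        Matrix.trace (A * B) ≤ ((2 * σ * ν + δ ^ 2 * τ * ν) / (2 * σ * δ)) *
          Matrix.trace (A * A)) ∧
    Matrix.trace (A * B) ≤ Real.sqrt (2 * τ * ν ^ 2 / σ) * Matrix.trace (A * A) := by
  have bound (δ : ℝ) (hδ : 0 < δ) : Matrix.trace (A * B) ≤
      ((2 * σ * ν + δ ^ 2 * τ * ν) / (2 * σ * δ)) * Matrix.trace (A * A) := by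
    have h := hApsd.trace_quadratic_nonneg_of_fromBlocks_smul hY δ
    have hcoeff : (2 * σ * ν + δ ^ 2 * τ * ν) / (2 * σ * δ) =
        (ν + δ ^ 2 * (τ * ν / (2 * σ))) / δ := by
      field_simp
    rw [hcoeff, div_mul_eq_mul_div, le_div_iff₀ hδ]
    linarith
  refine ⟨bound, ?_⟩
  set δ₀ := Real.sqrt (2 * σ / τ)
  have hδ₀ : 0 < δ₀ := Real.sqrt_pos.mpr (by positivity)
  have hδ₀_sq : δ₀ ^ 2 = 2 * σ / τ := Real.sq_sqrt (by positivity)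
  have hcoeff : (2 * σ * ν + δ₀ ^ 2 * τ * ν) / (2 * σ * δ₀) = Real.sqrt (2 * τ * ν ^ 2 / σ) := by
    rw [eq_comm, Real.sqrt_eq_iff_eq_sq (by positivity) (by positivity), hδ₀_sq, div_pow,
      mul_pow, hδ₀_sq]
    field_simp
    ring
  simpa only [hcoeff] using bound δ₀ hδ₀

/-- If `Y = [[νA, -½B], [-½B, (τν/(2σ))A]]` is positive semidefinite (with `A` symmetric
positive semidefinite and `B` symmetric), then for every `δ > 0` one has
`((2σν + δ²τν)/(2σδ)) Tr(A²) ≥ Tr(AB)`, and in particular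
`√(2τν²/σ) Tr(A²) ≥ Tr(AB)`. -/
theorem stmt12 (n : ℕ) (ν σ τ : ℝ) (hν : 0 < ν) (hσ : 0 < σ) (hτ : 0 < τ)
    (A B : Matrix (Fin n) (Fin n) ℝ) (hA : A.IsSymm) (hB : B.IsSymm) (hApsd : A.PosSemidef)
    (hY : (Matrix.fromBlocks (ν • A) ((-(1 : ℝ) / 2) • B) ((-(1 : ℝ) / 2) • B)
      ((τ * ν / (2 * σ)) • A)).PosSemidef) :
    (∀ δ : ℝ, 0 < δ →
        Matrix.trace (A * B) ≤ ((2 * σ * ν + δ ^ 2 * τ * ν) / (2 * σ * δ)) *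
          Matrix.trace (A * A)) ∧
    Matrix.trace (A * B) ≤ Real.sqrt (2 * τ * ν ^ 2 / σ) * Matrix.trace (A * A) :=
  stmt12_general n ν σ τ hν hσ hτ A B hApsd hY
end

section
/- Let ν > 0 and 0 < α₀ < ν²/4. Then ν ≥ A₂^{-1} + √(ν² − 4α₀), where A₂^{-1} = 2ν min{1, α₀} / (1 + ν²/2 − α₀ + √((ν²/2 − α₀ − 1)² + ν²)). -/
/-- For `ν > 0` and `0 < α₀ < ν²/4`, `ν ≥ A₂⁻¹ + √(ν² - 4α₀)` with
`A₂⁻¹ = 2ν min{1, α₀}/(1 + ν²/2 - α₀ + √((ν²/2 - α₀ - 1)² + ν²))`. -/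
theorem stmt14 (ν α₀ : ℝ) (hν : 0 < ν) (h0 : 0 < α₀) (h1 : α₀ < ν ^ 2 / 4) :
    2 * ν * min 1 α₀ /
        (1 + ν ^ 2 / 2 - α₀ + Real.sqrt ((ν ^ 2 / 2 - α₀ - 1) ^ 2 + ν ^ 2)) +
      Real.sqrt (ν ^ 2 - 4 * α₀) ≤ ν := by
  set x : ℝ := ν ^ 2 / 2 - α₀ with hx
  set s : ℝ := Real.sqrt (ν ^ 2 - 4 * α₀) with hsdef
  set R : ℝ := Real.sqrt ((x - 1) ^ 2 + ν ^ 2) with hRdef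
  have hs0 : 0 ≤ s := Real.sqrt_nonneg _
  have hs2 : s ^ 2 = ν ^ 2 - 4 * α₀ := Real.sq_sqrt (by nlinarith)
  have hR0 : 0 ≤ R := Real.sqrt_nonneg _
  have hR2 : R ^ 2 = (x - 1) ^ 2 + ν ^ 2 := Real.sq_sqrt (by positivity)
  have hxpos : 0 < x := by simp only [hx]; nlinarith
  have hsν : s < ν := by nlinarith
  have hD : 0 < 1 + x + R := by linarith
  have hνs : 0 ≤ ν * s := mul_nonneg hν.le hs0
  have hx2 : ν ^ 2 = 2 * x + 2 * α₀ := by simp only [hx]; ring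
  -- main inequality: 2 ν min(1,α₀) ≤ (ν - s) * (1 + x + R)
  have hmain : 2 * ν * min 1 α₀ ≤ (ν - s) * (1 + x + R) := by
    rcases le_total α₀ 1 with hα | hα
    · -- min = α₀
      rw [min_eq_right hα]
      have hid : (2 * R) ^ 2 - (ν * s + 2 * (α₀ - 1)) ^ 2
          = 16 * α₀ + 4 * (ν * s) * (1 - α₀) := by
        linear_combination 4 * hR2 - ν ^ 2 * hs2 + (4 + 2 * α₀ - ν ^ 2 - 2 * x) * hx2
      have key : ν * s + 2 * (α₀ - 1) ≤ 2 * R := by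
        rcases le_or_gt (ν * s + 2 * (α₀ - 1)) 0 with hc | hc
        · linarith
        · have hsq : (ν * s + 2 * (α₀ - 1)) ^ 2 ≤ (2 * R) ^ 2 := by
            nlinarith [hid, mul_nonneg hνs (sub_nonneg.2 hα)]
          have h := Real.sqrt_le_sqrt hsq
          rwa [Real.sqrt_sq hc.le, Real.sqrt_sq (by linarith : (0:ℝ) ≤ 2 * R)] at h
      have h2 : (ν - s) * (ν * (ν + s)) ≤ (ν - s) * (2 * (1 + x + R)) := by
        apply mul_le_mul_of_nonneg_left _ (by linarith)
        nlinarith [key, hx2, hα]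
      nlinarith [h2, hs2]
    · -- min = 1
      rw [min_eq_left hα]
      have hid : (2 * α₀ * R) ^ 2 - (ν * s - 2 * x * (α₀ - 1)) ^ 2
          = 8 * x ^ 2 * (α₀ - 1) + 8 * α₀ ^ 2 * (1 + α₀) + 4 * (ν * s) * x * (α₀ - 1) := by
        linear_combination 4 * α₀ ^ 2 * hR2 - ν ^ 2 * hs2 +
          (4 * α₀ ^ 2 + 2 * α₀ - ν ^ 2 - 2 * x) * hx2
      have key : ν * s - 2 * x * (α₀ - 1) ≤ 2 * α₀ * R := by
        rcases le_or_gt (ν * s - 2 * x * (α₀ - 1)) 0 with hc | hc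
        · nlinarith [mul_nonneg h0.le hR0]
        · have p1 : 0 ≤ 8 * x ^ 2 * (α₀ - 1) :=
            mul_nonneg (by positivity) (sub_nonneg.2 hα)
          have p2 : 0 ≤ 8 * α₀ ^ 2 * (1 + α₀) := by positivity
          have p3 : 0 ≤ 4 * (ν * s) * x * (α₀ - 1) :=
            mul_nonneg (mul_nonneg (by linarith) hxpos.le) (sub_nonneg.2 hα)
          have hsq : (ν * s - 2 * x * (α₀ - 1)) ^ 2 ≤ (2 * α₀ * R) ^ 2 := by
            linarith [hid]
          have h := Real.sqrt_le_sqrt hsq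
          rwa [Real.sqrt_sq hc.le,
            Real.sqrt_sq (by positivity : (0:ℝ) ≤ 2 * α₀ * R)] at h
      have h2 : (ν - s) * (ν * (ν + s)) ≤ (ν - s) * (2 * α₀ * (1 + x + R)) := by
        apply mul_le_mul_of_nonneg_left _ (by linarith)
        linarith [key, hx2]
      have h3 : 4 * α₀ * ν ≤ (ν - s) * (2 * α₀ * (1 + x + R)) := by
        nlinarith [h2, hs2]
      have h4 : 2 * α₀ * (2 * ν) ≤ 2 * α₀ * ((ν - s) * (1 + x + R)) := by linarith [h3]
      have h5 := le_of_mul_le_mul_left h4 (by positivity : (0:ℝ) < 2 * α₀)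
      linarith
  have hdiv : 2 * ν * min 1 α₀ / (1 + x + R) ≤ ν - s :=
    (div_le_iff₀ hD).2 (by linarith [hmain])
  have hE : (1 : ℝ) + ν ^ 2 / 2 - α₀ + R = 1 + x + R := by rw [hx]; ring
  rw [hE]
  linarith
end

section
/- Let ν > 0 and M^{-1} ∈ ℝ^{n×n} be symmetric positive definite with some eigenvalue equal to ν²/4, with eigenvector ψ. For the matrix C = [[0, −M^{-1/2}], [M^{-1/2}, νI]], the vector w = (−ψ, ψ) is an eigenvector with eigenvalue ν/2, and the vector g = (0, (2/ν)ψ) satisfies (C − (ν/2)I) g = w, i.e. g is a generalized eigenvector of rank 2; hence ν/2 is a defective eigenvalue of C. -/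
open Matrix

namespace Matrix.PosSemidef

/-- The positive semidefinite square root of a positive semidefinite matrix
(re-stated here with its definition from the older Mathlib, where it has since been removed). -/
noncomputable def sqrt {n 𝕜 : Type*} [Fintype n] [DecidableEq n] [RCLike 𝕜] [PartialOrder 𝕜]
    {A : Matrix n n 𝕜} (hA : PosSemidef A) : Matrix n n 𝕜 :=
  hA.1.eigenvectorUnitary.1 * diagonal ((↑) ∘ (√·) ∘ hA.1.eigenvalues) *
  (star hA.1.eigenvectorUnitary : Matrix n n 𝕜)

end Matrix.PosSemidef

/-!
Since `√N` is positive semidefinite and `ν / 2 > 0`, the matrix `√N + (ν / 2) I` is positive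
definite, hence invertible; so `(√N + ν / 2)(√N - ν / 2) ψ = (N - ν² / 4) ψ = 0` forces
`√N ψ = (ν / 2) ψ`. Then `C` acts on `w = (-ψ, ψ)` and `g = (0, (2 / ν) ψ)` as a `2 × 2` Jordan
block: `(C - ν / 2) w = 0` and `(C - ν / 2) g = w ≠ 0`.
-/

open scoped ComplexOrder

namespace Matrix.PosSemidef

variable {n 𝕜 : Type*} [Fintype n] [DecidableEq n] [RCLike 𝕜] {A : Matrix n n 𝕜}

lemma sqrt_mul_self (hA : A.PosSemidef) : hA.sqrt * hA.sqrt = A := by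
  have hD : diagonal ((RCLike.ofReal : ℝ → 𝕜) ∘ (√·) ∘ hA.1.eigenvalues) *
      diagonal ((RCLike.ofReal : ℝ → 𝕜) ∘ (√·) ∘ hA.1.eigenvalues)
      = diagonal (RCLike.ofReal ∘ hA.1.eigenvalues) := by
    rw [diagonal_mul_diagonal]
    congr 1
    funext i
    simp [← RCLike.ofReal_mul, Real.mul_self_sqrt (hA.eigenvalues_nonneg i)]
  unfold Matrix.PosSemidef.sqrt
  conv_rhs => rw [hA.1.spectral_theorem, Unitary.conjStarAlgAut_apply]
  rw [← hD]
  simp only [mul_assoc]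
  rw [← mul_assoc (star (hA.1.eigenvectorUnitary : Matrix n n 𝕜)),
    Unitary.coe_star_mul_self, one_mul]

lemma posSemidef_sqrt (hA : A.PosSemidef) : hA.sqrt.PosSemidef := by
  unfold Matrix.PosSemidef.sqrt
  rw [star_eq_conjTranspose]
  refine Matrix.PosSemidef.mul_mul_conjTranspose_same ?_ _
  simp [posSemidef_diagonal_iff, Real.sqrt_nonneg]

lemma mulVec_eq_smul_of_mul_self_mulVec_eq {S : Matrix n n 𝕜} (hS : S.PosSemidef) {c : ℝ}
    (hc : 0 < c) {v : n → 𝕜} (h : (S * S) *ᵥ v = c ^ 2 • v) : S *ᵥ v = c • v := by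
  have hpos : (S + c • (1 : Matrix n n 𝕜)).PosDef := PosDef.posSemidef_add hS (PosDef.one.smul hc)
  refine sub_eq_zero.mp (mulVec_injective_iff_isUnit.mpr hpos.isUnit ?_)
  rw [mulVec_zero, add_mulVec, mulVec_sub, mulVec_mulVec, h, smul_mulVec, one_mulVec,
    mulVec_smul]
  module

lemma sqrt_mulVec_eq_smul (hA : A.PosSemidef) {c : ℝ} (hc : 0 < c) {v : n → 𝕜}
    (h : A *ᵥ v = c ^ 2 • v) : hA.sqrt *ᵥ v = c • v :=
  hA.posSemidef_sqrt.mulVec_eq_smul_of_mul_self_mulVec_eq hc (by rwa [hA.sqrt_mul_self])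

end Matrix.PosSemidef

section DampedBlock

variable {n K : Type*} [Fintype n] [DecidableEq n] [Field K] [CharZero K]
  {S : Matrix n n K} {ν : K} {ψ : n → K}

lemma fromBlocks_mulVec_sum_elim_neg_eq (hS : S *ᵥ ψ = (ν / 2) • ψ) :
    fromBlocks 0 (-S) S (ν • 1) *ᵥ Sum.elim (-ψ) ψ = (ν / 2) • Sum.elim (-ψ) ψ := by
  ext (i | i) <;>
    simp only [fromBlocks_mulVec, Sum.elim_comp_inl, Sum.elim_comp_inr, zero_mulVec,
      neg_mulVec, mulVec_neg, smul_mulVec, one_mulVec, hS, Sum.elim_inl, Sum.elim_inr,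
      Pi.add_apply, Pi.neg_apply, Pi.smul_apply, Pi.zero_apply, smul_eq_mul] <;>
    ring

lemma fromBlocks_mulVec_sum_elim_zero_sub (hν : ν ≠ 0) (hS : S *ᵥ ψ = (ν / 2) • ψ) :
    fromBlocks 0 (-S) S (ν • 1) *ᵥ Sum.elim 0 ((2 / ν) • ψ) -
      (ν / 2) • Sum.elim (0 : n → K) ((2 / ν) • ψ) = Sum.elim (-ψ) ψ := by
  ext (i | i) <;>
    simp only [fromBlocks_mulVec, Sum.elim_comp_inl, Sum.elim_comp_inr,
      mulVec_zero, neg_mulVec, mulVec_smul, smul_mulVec, one_mulVec, hS, Sum.elim_inl,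
      Sum.elim_inr, Pi.add_apply, Pi.sub_apply, Pi.neg_apply, Pi.smul_apply, Pi.zero_apply,
      smul_eq_mul] <;>
    field_simp <;>
    ring

end DampedBlock

lemma Matrix.sub_smul_one_mulVec {n R : Type*} [Fintype n] [DecidableEq n] [CommRing R]
    (C : Matrix n n R) (a : R) (v : n → R) : (C - a • 1) *ᵥ v = C *ᵥ v - a • v := by
  rw [sub_mulVec, smul_mulVec, one_mulVec]

/-- If `N` (playing the role of `M⁻¹`) is real symmetric positive definite with eigenvalue
`ν²/4` and eigenvector `ψ`, then for `C = [[0, -N^{1/2}], [N^{1/2}, νI]]` the vector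
`w = (-ψ, ψ)` is an eigenvector with eigenvalue `ν/2`, `g = (0, (2/ν)ψ)` satisfies
`(C - (ν/2)I)g = w` (a rank-2 generalized eigenvector); hence `ν/2` is a defective
eigenvalue of `C` (the kernel of `(C - (ν/2)I)²` strictly contains the eigenspace). -/
theorem stmt16 (n : ℕ) (N : Matrix (Fin n) (Fin n) ℝ) (hN : N.PosDef) (ν : ℝ)
    (hν : 0 < ν) (ψ : Fin n → ℝ) (hψ : ψ ≠ 0)
    (heig : N.mulVec ψ = (ν ^ 2 / 4) • ψ) :
    let C := Matrix.fromBlocks (0 : Matrix (Fin n) (Fin n) ℝ) (-(hN.posSemidef.sqrt))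
      hN.posSemidef.sqrt (ν • 1)
    let w : Fin n ⊕ Fin n → ℝ := Sum.elim (fun i => -ψ i) ψ
    let g : Fin n ⊕ Fin n → ℝ := Sum.elim 0 (fun i => (2 / ν) * ψ i)
    C.mulVec w = (ν / 2) • w ∧ w ≠ 0 ∧ C.mulVec g - (ν / 2) • g = w ∧
    ∃ u : Fin n ⊕ Fin n → ℝ,
      (C - (ν / 2) • 1).mulVec ((C - (ν / 2) • 1).mulVec u) = 0 ∧
      (C - (ν / 2) • 1).mulVec u ≠ 0 := by
  intro C w g
  have hS : hN.posSemidef.sqrt *ᵥ ψ = (ν / 2) • ψ :=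
    hN.posSemidef.sqrt_mulVec_eq_smul (half_pos hν) (by rw [heig, div_pow]; norm_num)
  have hCw : C *ᵥ w = (ν / 2) • w := fromBlocks_mulVec_sum_elim_neg_eq hS
  have hCg : C *ᵥ g - (ν / 2) • g = w := fromBlocks_mulVec_sum_elim_zero_sub hν.ne' hS
  have hw : w ≠ 0 := fun h => hψ (congrArg (· ∘ Sum.inr) h)
  have hAg : (C - (ν / 2) • 1) *ᵥ g = w := by rwa [sub_smul_one_mulVec]
  refine ⟨hCw, hw, hCg, g, ?_, hAg ▸ hw⟩
  rw [hAg, sub_smul_one_mulVec, hCw, sub_self]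
end
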